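/- Let S be a distributive inverse semigroup and let X_s denote the set of prime filters containing s. With the product of prime filters defined by F · G = (FG)↑ when d(F) = r(G), we have X_s X_t = X_{st} for all s, t ∈ S. -/

import Mathlib

namespace InvPaper

/-- An inverse semigroup: a regular semigroup whose idempotents commute
(equivalently, each element has a unique generalized inverse `sinv`). -/
class InverseSemigroup (S : Type*) extends Semigroup S where
  sinv : S → S
  mul_sinv_mul : ∀ a : S, a * sinv a * a = a
  sinv_mul_sinv : ∀ a : S, sinv a * a * sinv a = sinv a
  idem_comm : ∀ e f : S, e * e = e → f * f = f → e * f = f * e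

open InverseSemigroup

variable {S : Type*}

section Basic
variable [InverseSemigroup S]

/-- `e` is an idempotent. -/
def idem (e : S) : Prop := e * e = e

/-- The natural partial order: `a ≤ b` iff `a = b * e` for some idempotent `e`. -/
def nle (a b : S) : Prop := ∃ e : S, idem e ∧ a = b * e

/-- `s` and `t` are compatible: `s⁻¹t` and `st⁻¹` are idempotents. -/
def compatible (s t : S) : Prop := idem (sinv s * t) ∧ idem (s * sinv t)

/-- `j` is the join (least upper bound) of `a` and `b` w.r.t. the natural partial order. -/
def isJoin (a b j : S) : Prop :=
  nle a j ∧ nle b j ∧ ∀ c : S, nle a c → nle b c → nle j c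

/-- `m` is the meet (greatest lower bound) of `a` and `b`. -/
def isMeet (a b m : S) : Prop :=
  nle m a ∧ nle m b ∧ ∀ z : S, nle z a → nle z b → nle z m

/-- `j` is the least upper bound of the set `A`. -/
def isJoinSet (A : Set S) (j : S) : Prop :=
  (∀ a ∈ A, nle a j) ∧ ∀ c : S, (∀ a ∈ A, nle a c) → nle j c

/-- A filter: a nonempty, downward-directed, upward-closed subset. -/
def IsFilter (F : Set S) : Prop :=
  F.Nonempty ∧ (∀ a ∈ F, ∀ b ∈ F, ∃ c ∈ F, nle c a ∧ nle c b) ∧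
    ∀ a ∈ F, ∀ b : S, nle a b → b ∈ F

/-- An order ideal: a downward-closed subset. -/
def IsOrderIdeal (A : Set S) : Prop := ∀ x ∈ A, ∀ y : S, nle y x → y ∈ A

end Basic

/-- An inverse semigroup with a (multiplicative) zero element. -/
class InverseSemigroupWithZero (S : Type*) extends InverseSemigroup S, Zero S where
  zmul : ∀ a : S, 0 * a = 0
  mulz : ∀ a : S, a * 0 = 0

section WithZero
variable [InverseSemigroupWithZero S]

/-- A proper filter: a filter not containing `0`. -/
def IsProperFilter (F : Set S) : Prop := IsFilter F ∧ (0 : S) ∉ F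

/-- An ultrafilter: a maximal proper filter. -/
def IsUltrafilter (F : Set S) : Prop :=
  IsProperFilter F ∧ ∀ G : Set S, IsProperFilter G → F ⊆ G → G = F

/-- A prime filter: a proper filter `F` such that whenever a join `a ∨ b` exists and
lies in `F`, then `a ∈ F` or `b ∈ F`. -/
def IsPrimeFilter (F : Set S) : Prop :=
  IsProperFilter F ∧ ∀ a b j : S, isJoin a b j → j ∈ F → a ∈ F ∨ b ∈ F

/-- `d(F) = (F⁻¹F)↑`, the upward closure of `{a⁻¹b : a, b ∈ F}`. -/
def dClosure (F : Set S) : Set S :=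
  {x | ∃ a ∈ F, ∃ b ∈ F, nle (InverseSemigroup.sinv a * b) x}

/-- `r(F) = (FF⁻¹)↑`, the upward closure of `{ab⁻¹ : a, b ∈ F}`. -/
def rClosure (F : Set S) : Set S :=
  {x | ∃ a ∈ F, ∃ b ∈ F, nle (a * InverseSemigroup.sinv b) x}

/-- The product of two filters: `F · G = (FG)↑`. -/
def filterMul (F G : Set S) : Set S :=
  {x | ∃ a ∈ F, ∃ b ∈ G, nle (a * b) x}

/-- `A` is ∨-closed: closed under existing joins of finite nonempty compatible subsets. -/
def IsVeeClosed (A : Set S) : Prop :=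
  ∀ Y : Finset S, Y.Nonempty → ↑Y ⊆ A → (∀ a ∈ Y, ∀ b ∈ Y, compatible a b) →
    ∀ j : S, isJoinSet (↑Y : Set S) j → j ∈ A

/-- The ∨-closure `A^∨`: all existing joins of finite nonempty compatible subsets of `A`. -/
def veeClosure (A : Set S) : Set S :=
  {x | ∃ Y : Finset S, Y.Nonempty ∧ ↑Y ⊆ A ∧ (∀ a ∈ Y, ∀ b ∈ Y, compatible a b) ∧
    isJoinSet (↑Y : Set S) x}

/-- A prime order ideal: if every common lower bound of `a` and `b` lies in `P`,
then `a ∈ P` or `b ∈ P`. -/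
def IsPrimeOrderIdeal (P : Set S) : Prop :=
  ∀ a b : S, (∀ z : S, nle z a → nle z b → z ∈ P) → a ∈ P ∨ b ∈ P

/-- The set of prime filters containing `s`. -/
def Xset (s : S) : Set (Set S) := {F | IsPrimeFilter F ∧ s ∈ F}

end WithZero

/-- A distributive inverse semigroup: compatible pairs have joins and
multiplication distributes over these joins. -/
class DistributiveInverseSemigroup (S : Type*) extends InverseSemigroupWithZero S where
  joins_exist : ∀ a b : S, compatible a b → ∃ j : S, isJoin a b j
  mul_distrib_left : ∀ a b j c : S, compatible a b → isJoin a b j →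
    isJoin (c * a) (c * b) (c * j)
  mul_distrib_right : ∀ a b j c : S, compatible a b → isJoin a b j →
    isJoin (a * c) (b * c) (j * c)

/-- A distributive inverse semigroup is Boolean if its idempotents form a generalized
Boolean algebra: relative complements of idempotents exist. -/
def IsBoolean (S : Type*) [DistributiveInverseSemigroup S] : Prop :=
  ∀ e f : S, idem e → idem f → nle e f →
    ∃ g : S, idem g ∧ e * g = 0 ∧ isJoin e g f

/-- A pseudogroup: an inverse semigroup with joins of all nonempty compatible subsets,
over which multiplication distributes. -/
class Pseudogroup (S : Type*) extends InverseSemigroup S where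
  joins_exist : ∀ A : Set S, A.Nonempty → (∀ a ∈ A, ∀ b ∈ A, compatible a b) →
    ∃ j : S, isJoinSet A j
  mul_distrib_left : ∀ (A : Set S) (j c : S), isJoinSet A j →
    isJoinSet ((c * ·) '' A) (c * j)
  mul_distrib_right : ∀ (A : Set S) (j c : S), isJoinSet A j →
    isJoinSet ((· * c) '' A) (j * c)

/-!
A filter `F ∋ a` satisfies `d(F) = (a⁻¹F)↑` and `r(F) = (Fa⁻¹)↑`, and when `d(F) = r(G)` the
product `F · G` is the translate `(aG)↑` for any `a ∈ F`. A translate `(cH)↑` of a prime filter is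
prime as soon as `c⁻¹c` fixes some element of `H`: below it, distributivity pulls a join above `ch`
back to a join above `h`; right translates follow by inversion. This gives `X_s X_t ⊆ X_{st}`.
Conversely `H ∈ X_{st}` is `F · G` for `F = (Ht⁻¹)↑ ∈ X_s` and `G = (s⁻¹H)↑ ∈ X_t`, since
`d(F) = (s⁻¹Ht⁻¹)↑ = r(G)` and `F · G = (ss⁻¹H)↑ = H`.
-/

section InverseSemigroup
variable [InverseSemigroup S]

lemma idem_mul_sinv (a : S) : idem (a * sinv a) := by
  show a * sinv a * (a * sinv a) = a * sinv a
  rw [← mul_assoc, mul_sinv_mul]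

lemma idem_sinv_mul (a : S) : idem (sinv a * a) := by
  show sinv a * a * (sinv a * a) = sinv a * a
  rw [← mul_assoc, sinv_mul_sinv]

lemma idem_mul {e f : S} (he : idem e) (hf : idem f) : idem (e * f) := by
  show (e * f) * (e * f) = e * f
  calc (e * f) * (e * f) = e * ((f * e) * f) := by simp only [mul_assoc]
    _ = (e * e) * (f * f) := by rw [idem_comm _ _ hf he]; simp only [mul_assoc]
    _ = e * f := by rw [show e * e = e from he, show f * f = f from hf]

lemma eq_sinv_of_mul_mul {a x : S} (h1 : a * x * a = a) (h2 : x * a * x = x) : x = sinv a := by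
  have ixa : idem (x * a) := show x * a * (x * a) = x * a by rw [← mul_assoc, h2]
  have iax : idem (a * x) := show a * x * (a * x) = a * x by rw [← mul_assoc, h1]
  have hx : x = sinv a * a * x :=
    calc x = x * (a * sinv a * a) * x := by rw [mul_sinv_mul, h2]
      _ = (x * a) * (sinv a * a) * x := by simp only [mul_assoc]
      _ = (sinv a * a) * (x * a * x) := by
          rw [idem_comm _ _ ixa (idem_sinv_mul a)]; simp only [mul_assoc]
      _ = sinv a * a * x := by rw [h2]
  have hy : sinv a = sinv a * a * x :=
    calc sinv a = sinv a * (a * x * a) * sinv a := by rw [h1, sinv_mul_sinv]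
      _ = sinv a * ((a * x) * (a * sinv a)) := by simp only [mul_assoc]
      _ = (sinv a * a * sinv a) * (a * x) := by
          rw [idem_comm _ _ iax (idem_mul_sinv a)]; simp only [mul_assoc]
      _ = sinv a * a * x := by rw [sinv_mul_sinv]; simp only [mul_assoc]
  exact hx.trans hy.symm

lemma sinv_sinv (a : S) : sinv (sinv a) = a :=
  (eq_sinv_of_mul_mul (sinv_mul_sinv a) (mul_sinv_mul a)).symm

lemma sinv_idem {e : S} (he : idem e) : sinv e = e := by
  have he' : e * e = e := he
  exact (eq_sinv_of_mul_mul (by rw [he', he']) (by rw [he', he'])).symm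

lemma sinv_mul (a b : S) : sinv (a * b) = sinv b * sinv a := by
  refine (eq_sinv_of_mul_mul ?_ ?_).symm
  · calc a * b * (sinv b * sinv a) * (a * b)
        = a * ((b * sinv b) * (sinv a * a)) * b := by simp only [mul_assoc]
      _ = (a * sinv a * a) * (b * sinv b * b) := by
          rw [idem_comm _ _ (idem_mul_sinv b) (idem_sinv_mul a)]; simp only [mul_assoc]
      _ = a * b := by rw [mul_sinv_mul, mul_sinv_mul]
  · calc sinv b * sinv a * (a * b) * (sinv b * sinv a)
        = sinv b * ((sinv a * a) * (b * sinv b)) * sinv a := by simp only [mul_assoc]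
      _ = (sinv b * b * sinv b) * (sinv a * a * sinv a) := by
          rw [idem_comm _ _ (idem_sinv_mul a) (idem_mul_sinv b)]; simp only [mul_assoc]
      _ = sinv b * sinv a := by rw [sinv_mul_sinv, sinv_mul_sinv]

lemma idem_conj {e : S} (he : idem e) (a : S) : idem (a * e * sinv a) := by
  show (a * e * sinv a) * (a * e * sinv a) = a * e * sinv a
  calc (a * e * sinv a) * (a * e * sinv a)
      = a * ((e * (sinv a * a)) * (e * sinv a)) := by simp only [mul_assoc]
    _ = (a * sinv a * a) * ((e * e) * sinv a) := by
        rw [idem_comm _ _ he (idem_sinv_mul a)]; simp only [mul_assoc]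
    _ = a * e * sinv a := by rw [mul_sinv_mul, show e * e = e from he]; simp only [mul_assoc]

lemma nle_refl (a : S) : nle a a :=
  ⟨sinv a * a, idem_sinv_mul a, by rw [← mul_assoc, mul_sinv_mul]⟩

lemma nle_trans {a b c : S} (h1 : nle a b) (h2 : nle b c) : nle a c := by
  obtain ⟨e, he, rfl⟩ := h1
  obtain ⟨f, hf, rfl⟩ := h2
  exact ⟨f * e, idem_mul hf he, mul_assoc c f e⟩

lemma nle_mul_idem (a : S) {e : S} (he : idem e) : nle (a * e) a := ⟨e, he, rfl⟩

lemma nle_idem_mul (b : S) {e : S} (he : idem e) : nle (e * b) b := by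
  refine ⟨sinv b * e * b, by simpa only [sinv_sinv] using idem_conj he (sinv b), ?_⟩
  calc e * b = e * (b * sinv b * b) := by rw [mul_sinv_mul]
    _ = ((b * sinv b) * e) * b := by
        rw [idem_comm _ _ (idem_mul_sinv b) he]; simp only [mul_assoc]
    _ = b * (sinv b * e * b) := by simp only [mul_assoc]

lemma nle_mul {a b c d : S} (h1 : nle a b) (h2 : nle c d) : nle (a * c) (b * d) := by
  obtain ⟨e, he, rfl⟩ := h1
  obtain ⟨f, hf, rfl⟩ := h2
  obtain ⟨g, hg, hedd⟩ := nle_idem_mul d he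
  refine ⟨g * f, idem_mul hg hf, ?_⟩
  calc b * e * (d * f) = b * (e * d) * f := by simp only [mul_assoc]
    _ = b * d * (g * f) := by rw [hedd]; simp only [mul_assoc]

lemma nle_sinv {a b : S} (h : nle a b) : nle (sinv a) (sinv b) := by
  obtain ⟨e, he, rfl⟩ := h
  rw [sinv_mul, sinv_idem he]
  exact nle_idem_mul _ he

lemma nle_sinv_iff {a b : S} : nle (sinv a) (sinv b) ↔ nle a b :=
  ⟨fun h => by simpa only [sinv_sinv] using nle_sinv h, nle_sinv⟩

lemma compatible_of_nle {x y j : S} (hx : nle x j) (hy : nle y j) : compatible x y := by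
  obtain ⟨e, he, rfl⟩ := hx
  obtain ⟨f, hf, rfl⟩ := hy
  constructor
  · have h : sinv (j * e) * (j * f) = (e * (sinv j * j)) * f := by
      rw [sinv_mul, sinv_idem he]; simp only [mul_assoc]
    rw [h]
    exact idem_mul (idem_mul he (idem_sinv_mul j)) hf
  · have h : (j * e) * sinv (j * f) = j * (e * f) * sinv j := by
      rw [sinv_mul, sinv_idem hf]; simp only [mul_assoc]
    rw [h]
    exact idem_conj (idem_mul he hf) j

lemma isJoin_sinv {x y j : S} (h : isJoin x y j) : isJoin (sinv x) (sinv y) (sinv j) := by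
  obtain ⟨hx, hy, hleast⟩ := h
  refine ⟨nle_sinv hx, nle_sinv hy, fun c hxc hyc => ?_⟩
  rw [← sinv_sinv c, nle_sinv_iff] at hxc hyc ⊢
  exact hleast _ hxc hyc

lemma sinv_mul_self_of_mul_idem (b : S) {e : S} (he : idem e) :
    sinv (b * e) * (b * e) = sinv b * b * e := by
  rw [sinv_mul, sinv_idem he]
  calc e * sinv b * (b * e) = (e * (sinv b * b)) * e := by simp only [mul_assoc]
    _ = sinv b * b * (e * e) := by
        rw [idem_comm _ _ he (idem_sinv_mul b)]; simp only [mul_assoc]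
    _ = sinv b * b * e := by rw [show e * e = e from he]

lemma mul_sinv_mul_self_of_nle {a b : S} (h : nle a b) : b * (sinv a * a) = a := by
  obtain ⟨e, he, rfl⟩ := h
  rw [sinv_mul_self_of_mul_idem b he, ← mul_assoc, ← mul_assoc, mul_sinv_mul]

lemma sinv_mul_of_nle {a b : S} (h : nle a b) : sinv b * a = sinv a * a := by
  obtain ⟨e, he, rfl⟩ := h
  rw [sinv_mul_self_of_mul_idem b he, mul_assoc]

lemma mul_sinv_of_nle {a b : S} (h : nle a b) : a * sinv b = a * sinv a := by
  obtain ⟨e, he, rfl⟩ := h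
  rw [sinv_mul, sinv_idem he]
  calc b * e * sinv b = b * (e * e) * sinv b := by rw [show e * e = e from he]
    _ = b * e * (e * sinv b) := by simp only [mul_assoc]

lemma mul_eq_self_of_nle {e w a : S} (hw : e * w = w) (h : nle a w) : e * a = a := by
  obtain ⟨f, -, rfl⟩ := h
  rw [← mul_assoc, hw]

end InverseSemigroup

section WithZero
variable [InverseSemigroupWithZero S]

lemma sinv_zero : sinv (0 : S) = 0 :=
  sinv_idem (InverseSemigroupWithZero.zmul 0)

lemma eq_zero_of_nle_zero {a : S} (h : nle a 0) : a = 0 := by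
  obtain ⟨e, -, rfl⟩ := h
  exact InverseSemigroupWithZero.zmul e

lemma mem_filterMul_singleton_left {c x : S} {A : Set S} :
    x ∈ filterMul {c} A ↔ ∃ a ∈ A, nle (c * a) x := by
  simp [filterMul]

lemma mem_filterMul_singleton_right {c x : S} {A : Set S} :
    x ∈ filterMul A {c} ↔ ∃ a ∈ A, nle (a * c) x := by
  simp [filterMul]

lemma filterMul_assoc (A B C : Set S) :
    filterMul (filterMul A B) C = filterMul A (filterMul B C) := by
  ext x
  constructor
  · rintro ⟨y, ⟨a, ha, b, hb, hab⟩, c, hc, hyc⟩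
    exact ⟨a, ha, b * c, ⟨b, hb, c, hc, nle_refl _⟩,
      nle_trans (by rw [← mul_assoc]; exact nle_mul hab (nle_refl c)) hyc⟩
  · rintro ⟨a, ha, y, ⟨b, hb, c, hc, hbc⟩, hay⟩
    exact ⟨a * b, ⟨a, ha, b, hb, nle_refl _⟩, c, hc,
      nle_trans (by rw [mul_assoc]; exact nle_mul (nle_refl a) hbc) hay⟩

lemma filterMul_singleton_mul (a b : S) (C : Set S) :
    filterMul {a * b} C = filterMul {a} (filterMul {b} C) := by
  ext x
  simp only [mem_filterMul_singleton_left]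
  constructor
  · rintro ⟨c, hc, habc⟩
    exact ⟨b * c, ⟨c, hc, nle_refl _⟩, by rwa [← mul_assoc]⟩
  · rintro ⟨y, ⟨c, hc, hbc⟩, hay⟩
    exact ⟨c, hc, nle_trans (by rw [mul_assoc]; exact nle_mul (nle_refl a) hbc) hay⟩

lemma IsFilter.exists_nle₃ {F : Set S} (hF : IsFilter F) {a b c : S} (ha : a ∈ F) (hb : b ∈ F)
    (hc : c ∈ F) : ∃ d ∈ F, nle d a ∧ nle d b ∧ nle d c := by
  obtain ⟨d₀, hd₀, hd₀a, hd₀b⟩ := hF.2.1 a ha b hb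
  obtain ⟨d, hd, hdd₀, hdc⟩ := hF.2.1 d₀ hd₀ c hc
  exact ⟨d, hd, nle_trans hdd₀ hd₀a, nle_trans hdd₀ hd₀b, hdc⟩

lemma IsFilter.filterMul_singleton {H : Set S} (hH : IsFilter H) (c : S) :
    IsFilter (filterMul {c} H) := by
  simp only [IsFilter, mem_filterMul_singleton_left]
  refine ⟨?_, ?_, ?_⟩
  · obtain ⟨h, hh⟩ := hH.1
    exact ⟨c * h, c, rfl, h, hh, nle_refl _⟩
  · rintro x ⟨h₁, hh₁, hx⟩ y ⟨h₂, hh₂, hy⟩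
    obtain ⟨h, hh, hh₁', hh₂'⟩ := hH.2.1 h₁ hh₁ h₂ hh₂
    exact ⟨c * h, ⟨h, hh, nle_refl _⟩, nle_trans (nle_mul (nle_refl c) hh₁') hx,
      nle_trans (nle_mul (nle_refl c) hh₂') hy⟩
  · rintro x ⟨h, hh, hx⟩ y hxy
    exact ⟨h, hh, nle_trans hx hxy⟩

lemma dClosure_eq_filterMul {F : Set S} (hF : IsFilter F) {a : S} (ha : a ∈ F) :
    dClosure F = filterMul {sinv a} F := by
  ext x
  rw [mem_filterMul_singleton_left]
  constructor
  · rintro ⟨a₁, ha₁, a₂, ha₂, hx⟩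
    obtain ⟨f, hf, hfa₁, hfa₂, hfa⟩ := hF.exists_nle₃ ha₁ ha₂ ha
    refine ⟨f, hf, ?_⟩
    rw [sinv_mul_of_nle hfa]
    exact nle_trans (nle_mul (nle_sinv hfa₁) hfa₂) hx
  · rintro ⟨f, hf, hx⟩
    exact ⟨a, ha, f, hf, hx⟩

lemma rClosure_eq_filterMul {G : Set S} (hG : IsFilter G) {b : S} (hb : b ∈ G) :
    rClosure G = filterMul G {sinv b} := by
  ext x
  rw [mem_filterMul_singleton_right]
  constructor
  · rintro ⟨b₁, hb₁, b₂, hb₂, hx⟩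
    obtain ⟨g, hg, hgb₁, hgb₂, hgb⟩ := hG.exists_nle₃ hb₁ hb₂ hb
    refine ⟨g, hg, ?_⟩
    rw [mul_sinv_of_nle hgb]
    exact nle_trans (nle_mul hgb₁ (nle_sinv hgb₂)) hx
  · rintro ⟨g, hg, hx⟩
    exact ⟨g, hg, b, hb, hx⟩

/-- Since `a⁻¹a ∈ d(F) = r(G)`, some `gg⁻¹ ≤ a⁻¹a` with `g ∈ G`, and then `a⁻¹a` fixes `g`. -/
lemma exists_mem_sinv_mul_self_mul_eq {F G : Set S} (hG : IsFilter G)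
    (hdr : dClosure F = rClosure G) {a b : S} (ha : a ∈ F) (hb : b ∈ G) :
    ∃ g ∈ G, nle g b ∧ sinv a * a * g = g := by
  have hd : sinv a * a ∈ rClosure G := hdr ▸ ⟨a, ha, a, ha, nle_refl _⟩
  obtain ⟨c, hc, d, hd, hcd⟩ := hd
  obtain ⟨g, hg, hgc, hgd, hgb⟩ := hG.exists_nle₃ hc hd hb
  have hgg : sinv a * a * (g * sinv g) = g * sinv g :=
    mul_eq_self_of_nle (idem_sinv_mul a) (nle_trans (nle_mul hgc (nle_sinv hgd)) hcd)
  refine ⟨g, hg, hgb, ?_⟩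
  calc sinv a * a * g = sinv a * a * (g * sinv g) * g := by
        rw [mul_assoc (sinv a * a), mul_sinv_mul]
    _ = g := by rw [hgg, mul_sinv_mul]

lemma filterMul_eq_filterMul_singleton {F G : Set S} (hF : IsFilter F) (hG : IsFilter G)
    (hdr : dClosure F = rClosure G) {a : S} (ha : a ∈ F) :
    filterMul F G = filterMul {a} G := by
  ext x
  rw [mem_filterMul_singleton_left]
  constructor
  · rintro ⟨a₁, ha₁, b, hb, hx⟩
    obtain ⟨a₀, ha₀, ha₀a, ha₀a₁⟩ := hF.2.1 a ha a₁ ha₁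
    obtain ⟨g, hg, hgb, hfix⟩ := exists_mem_sinv_mul_self_mul_eq hG hdr ha₀ hb
    refine ⟨g, hg, ?_⟩
    have hag : a * g = a₀ * g :=
      calc a * g = a * (sinv a₀ * a₀ * g) := by rw [hfix]
        _ = a * (sinv a₀ * a₀) * g := by simp only [mul_assoc]
        _ = a₀ * g := by rw [mul_sinv_mul_self_of_nle ha₀a]
    rw [hag]
    exact nle_trans (nle_mul ha₀a₁ hgb) hx
  · rintro ⟨g, hg, hx⟩
    exact ⟨a, ha, g, hg, hx⟩

lemma filterMul_singleton_eq_self {H : Set S} (hH : IsFilter H) {e w : S} (hw : w ∈ H)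
    (hew : e * w = w) : filterMul {e} H = H := by
  ext x
  rw [mem_filterMul_singleton_left]
  constructor
  · rintro ⟨h, hh, hx⟩
    obtain ⟨h', hh', hh'h, hh'w⟩ := hH.2.1 h hh w hw
    have hh'x : nle h' x := by
      rw [← mul_eq_self_of_nle hew hh'w]
      exact nle_trans (nle_mul (nle_refl e) hh'h) hx
    exact hH.2.2 h' hh' x hh'x
  · intro hx
    obtain ⟨h, hh, hhx, hhw⟩ := hH.2.1 x hx w hw
    exact ⟨h, hh, by rwa [mul_eq_self_of_nle hew hhw]⟩

lemma IsPrimeFilter.preimage_sinv {H : Set S} (hH : IsPrimeFilter H) :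
    IsPrimeFilter (sinv ⁻¹' H) := by
  obtain ⟨⟨⟨⟨a, ha⟩, hdir, hup⟩, h0⟩, hprime⟩ := hH
  refine ⟨⟨⟨⟨sinv a, by rwa [Set.mem_preimage, sinv_sinv]⟩, ?_, ?_⟩, ?_⟩, ?_⟩
  · intro x hx y hy
    obtain ⟨c, hc, hcx, hcy⟩ := hdir _ hx _ hy
    refine ⟨sinv c, by rwa [Set.mem_preimage, sinv_sinv], ?_, ?_⟩ <;>
      rw [← nle_sinv_iff, sinv_sinv] <;> assumption
  · exact fun x hx y hxy => hup _ hx _ (nle_sinv hxy)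
  · rwa [Set.mem_preimage, sinv_zero]
  · exact fun x y j hj hjH => hprime _ _ _ (isJoin_sinv hj) hjH

lemma filterMul_singleton_right_eq_preimage_sinv (H : Set S) (c : S) :
    filterMul H {c} = sinv ⁻¹' filterMul {sinv c} (sinv ⁻¹' H) := by
  ext x
  rw [Set.mem_preimage, mem_filterMul_singleton_left, mem_filterMul_singleton_right]
  constructor
  · rintro ⟨h, hh, hx⟩
    refine ⟨sinv h, by rwa [Set.mem_preimage, sinv_sinv], ?_⟩
    rw [← sinv_mul]
    exact nle_sinv hx
  · rintro ⟨h, hh, hx⟩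
    refine ⟨sinv h, hh, ?_⟩
    rw [← nle_sinv_iff, sinv_mul, sinv_sinv]
    exact hx

end WithZero

section Distributive
variable [DistributiveInverseSemigroup S]

lemma isJoin_mul_mul {x y j : S} (a b : S) (hj : isJoin x y j) :
    isJoin (a * x * b) (a * y * b) (a * j * b) := by
  have hjb := DistributiveInverseSemigroup.mul_distrib_right x y j b
    (compatible_of_nle hj.1 hj.2.1) hj
  simpa only [mul_assoc] using DistributiveInverseSemigroup.mul_distrib_left _ _ _ a
    (compatible_of_nle hjb.1 hjb.2.1) hjb

lemma IsPrimeFilter.filterMul_singleton_left {H : Set S} (hH : IsPrimeFilter H) {c w : S}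
    (hw : w ∈ H) (hcw : sinv c * c * w = w) : IsPrimeFilter (filterMul {c} H) := by
  have below : ∀ x ∈ filterMul {c} H, ∃ h ∈ H, nle (c * h) x ∧ sinv c * c * h = h := by
    intro x hx
    obtain ⟨h₀, hh₀, hx⟩ := mem_filterMul_singleton_left.1 hx
    obtain ⟨h, hh, hhh₀, hhw⟩ := hH.1.1.2.1 h₀ hh₀ w hw
    exact ⟨h, hh, nle_trans (nle_mul (nle_refl c) hhh₀) hx, mul_eq_self_of_nle hcw hhw⟩
  refine ⟨⟨hH.1.1.filterMul_singleton c, fun h0 => ?_⟩, fun x y j hj hjm => ?_⟩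
  · obtain ⟨h, hh, hch, hfix⟩ := below 0 h0
    have h_eq : h = 0 := by
      rw [← hfix, mul_assoc, eq_zero_of_nle_zero hch, InverseSemigroupWithZero.mulz]
    exact hH.1.2 (h_eq ▸ hh)
  · obtain ⟨h, hh, ⟨e, he, hche⟩, hfix⟩ := below j hjm
    have hjoin := isJoin_mul_mul (sinv c) e hj
    rw [mul_assoc (sinv c) j e, ← hche, ← mul_assoc, hfix] at hjoin
    have hback : ∀ z, nle (c * (sinv c * z * e)) z := fun z => by
      rw [show c * (sinv c * z * e) = c * sinv c * z * e by simp only [mul_assoc]]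
      exact nle_trans (nle_mul_idem _ he) (nle_idem_mul z (idem_mul_sinv c))
    exact (hH.2 _ _ _ hjoin hh).imp
      (fun hx => mem_filterMul_singleton_left.2 ⟨_, hx, hback x⟩)
      (fun hy => mem_filterMul_singleton_left.2 ⟨_, hy, hback y⟩)

lemma IsPrimeFilter.filterMul_singleton_right {H : Set S} (hH : IsPrimeFilter H) {c w : S}
    (hw : w ∈ H) (hwc : w * (c * sinv c) = w) : IsPrimeFilter (filterMul H {c}) := by
  rw [filterMul_singleton_right_eq_preimage_sinv]
  refine (hH.preimage_sinv.filterMul_singleton_left (w := sinv w)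
    (by rwa [Set.mem_preimage, sinv_sinv]) ?_).preimage_sinv
  conv_rhs => rw [← hwc]
  rw [sinv_mul, sinv_mul]

lemma isPrimeFilter_filterMul {F G : Set S} (hF : IsPrimeFilter F) (hG : IsPrimeFilter G)
    (hdr : dClosure F = rClosure G) : IsPrimeFilter (filterMul F G) := by
  obtain ⟨a, ha⟩ := hF.1.1.1
  obtain ⟨b, hb⟩ := hG.1.1.1
  obtain ⟨g, hg, -, hfix⟩ := exists_mem_sinv_mul_self_mul_eq hG.1.1 hdr ha hb
  rw [filterMul_eq_filterMul_singleton hF.1.1 hG.1.1 hdr ha]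
  exact hG.filterMul_singleton_left hg hfix

lemma IsPrimeFilter.exists_filterMul_eq {H : Set S} (hH : IsPrimeFilter H) {s t : S}
    (hst : s * t ∈ H) :
    ∃ F ∈ Xset s, ∃ G ∈ Xset t, dClosure F = rClosure G ∧ H = filterMul F G := by
  have hF : IsPrimeFilter (filterMul H {sinv t}) :=
    hH.filterMul_singleton_right hst
      (by rw [sinv_sinv, mul_assoc s, ← mul_assoc t, mul_sinv_mul])
  have hG : IsPrimeFilter (filterMul {sinv s} H) :=
    hH.filterMul_singleton_left hst (by rw [sinv_sinv, ← mul_assoc, mul_sinv_mul])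
  have hsF : s ∈ filterMul H {sinv t} := mem_filterMul_singleton_right.2
    ⟨s * t, hst, by rw [mul_assoc]; exact nle_mul_idem s (idem_mul_sinv t)⟩
  have htG : t ∈ filterMul {sinv s} H := mem_filterMul_singleton_left.2
    ⟨s * t, hst, by rw [← mul_assoc]; exact nle_idem_mul t (idem_sinv_mul s)⟩
  have hdr : dClosure (filterMul H {sinv t}) = rClosure (filterMul {sinv s} H) := by
    rw [dClosure_eq_filterMul hF.1.1 hsF, rClosure_eq_filterMul hG.1.1 htG, filterMul_assoc]
  refine ⟨_, ⟨hF, hsF⟩, _, ⟨hG, htG⟩, hdr, ?_⟩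
  rw [filterMul_eq_filterMul_singleton hF.1.1 hG.1.1 hdr hsF, ← filterMul_singleton_mul,
    filterMul_singleton_eq_self hH.1.1 hst (by rw [← mul_assoc, mul_sinv_mul])]

end Distributive

/-- With the product `F · G = (FG)↑` of prime filters defined when
`d(F) = r(G)`, one has `X_s X_t = X_{st}`. -/
theorem stmt15 {S : Type*} [DistributiveInverseSemigroup S] (s t : S) :
    {H : Set S | ∃ F ∈ Xset s, ∃ G ∈ Xset t, dClosure F = rClosure G ∧ H = filterMul F G}
      = Xset (s * t) := by
  ext H
  constructor
  · rintro ⟨F, ⟨hF, hs⟩, G, ⟨hG, ht⟩, hdr, rfl⟩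
    exact ⟨isPrimeFilter_filterMul hF hG hdr, s, hs, t, ht, nle_refl _⟩
  · rintro ⟨hH, hst⟩
    exact hH.exists_filterMul_eq hst

end InvPaper
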